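/- arXiv:1904.03789 — 2 statements merged into one kernel-verified Lean document; each statement's English description precedes it below -/
import Mathlib

section
/- For the Hahn recurrence coefficients b_n(α,β) = A_n + C_n and u_n(α,β) = A_{n-1}C_n (with A_n, C_n as in the standard Hahn formulas with truncation parameter N), the parameter substitution α̃ = -N-1-β, β̃ = -N-1-α realizes the mirror transform: b_n(α̃,β̃) = b_{N-n}(α,β) and u_n(α̃,β̃) = u_{N+1-n}(α,β). -/
/-!
With `m = N - t`, the substitution `α ↦ -N-1-β`, `β ↦ -N-1-α` turns each numerator factor of
`A` into minus or plus a numerator factor of `C` at `m`, and likewise for the denominators; the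
signs cancel in pairs, so `A` and `C` are exchanged as rational functions. Then `b = A + C` is
mirrored at once, and `u = A(t-1) C(t)` is mirrored at `N + 1 - t`.
-/

noncomputable section

namespace Hahn

def coeffA (N a c t : ℝ) : ℝ :=
  (t + a + c + 1) * (t + a + 1) * (N - t) / ((2 * t + a + c + 1) * (2 * t + a + c + 2))

def coeffC (N a c t : ℝ) : ℝ :=
  t * (t + a + c + N + 1) * (t + c) / ((2 * t + a + c + 1) * (2 * t + a + c))

def coeffB (N a c t : ℝ) : ℝ := coeffA N a c t + coeffC N a c t

def coeffU (N a c t : ℝ) : ℝ := coeffA N a c (t - 1) * coeffC N a c t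

variable (N a c t : ℝ)

theorem coeffA_mirror : coeffA N (-N - 1 - c) (-N - 1 - a) t = coeffC N a c (N - t) := by
  unfold coeffA coeffC
  congr 1 <;> ring

theorem coeffC_mirror : coeffC N (-N - 1 - c) (-N - 1 - a) t = coeffA N a c (N - t) := by
  unfold coeffA coeffC
  congr 1 <;> ring

theorem coeffB_mirror : coeffB N (-N - 1 - c) (-N - 1 - a) t = coeffB N a c (N - t) := by
  rw [coeffB, coeffB, coeffA_mirror, coeffC_mirror, add_comm]

theorem coeffU_mirror : coeffU N (-N - 1 - c) (-N - 1 - a) t = coeffU N a c (N + 1 - t) := by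
  rw [coeffU, coeffU, coeffA_mirror, coeffC_mirror, mul_comm,
    show N - (t - 1) = N + 1 - t by ring, show N + 1 - t - 1 = N - t by ring]

end Hahn

end

theorem stmt11_general (N : ℕ) (α β : ℝ)
    (A C b u : ℝ → ℝ → ℝ → ℝ)
    (hA : ∀ a c t : ℝ, A a c t = (t + a + c + 1) * (t + a + 1) * ((N : ℝ) - t) /
        ((2 * t + a + c + 1) * (2 * t + a + c + 2)))
    (hC : ∀ a c t : ℝ, C a c t = t * (t + a + c + (N : ℝ) + 1) * (t + c) /
        ((2 * t + a + c + 1) * (2 * t + a + c)))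
    (hb : ∀ a c t : ℝ, b a c t = A a c t + C a c t)
    (hu : ∀ a c t : ℝ, u a c t = A a c (t - 1) * C a c t)
    (α' β' : ℝ) (hα' : α' = -(N : ℝ) - 1 - β) (hβ' : β' = -(N : ℝ) - 1 - α) :
    ∀ n : ℕ, n ≤ N →
      b α' β' (n : ℝ) = b α β ((N : ℝ) - n) ∧
      u α' β' (n : ℝ) = u α β ((N : ℝ) + 1 - n) := by
  intro n _
  obtain rfl : A = Hahn.coeffA N := funext₃ hA
  obtain rfl : C = Hahn.coeffC N := funext₃ hC
  obtain rfl : b = Hahn.coeffB N := funext₃ hb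
  obtain rfl : u = Hahn.coeffU N := funext₃ hu
  subst hα' hβ'
  exact ⟨Hahn.coeffB_mirror .., Hahn.coeffU_mirror ..⟩

theorem stmt11 (N : ℕ) (α β : ℝ)
    (hden : ∀ m : ℤ, (m : ℝ) + α + β ≠ 0)
    (A C b u : ℝ → ℝ → ℝ → ℝ)
    (hA : ∀ a c t : ℝ, A a c t = (t + a + c + 1) * (t + a + 1) * ((N : ℝ) - t) /
        ((2 * t + a + c + 1) * (2 * t + a + c + 2)))
    (hC : ∀ a c t : ℝ, C a c t = t * (t + a + c + (N : ℝ) + 1) * (t + c) /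
        ((2 * t + a + c + 1) * (2 * t + a + c)))
    (hb : ∀ a c t : ℝ, b a c t = A a c t + C a c t)
    (hu : ∀ a c t : ℝ, u a c t = A a c (t - 1) * C a c t)
    (α' β' : ℝ) (hα' : α' = -(N : ℝ) - 1 - β) (hβ' : β' = -(N : ℝ) - 1 - α) :
    ∀ n : ℕ, n ≤ N →
      b α' β' (n : ℝ) = b α β ((N : ℝ) - n) ∧
      u α' β' (n : ℝ) = u α β ((N : ℝ) + 1 - n) :=
  stmt11_general N α β A C b u hA hC hb hu α' β' hα' hβ'
end

section
/- Given a three-term recurrence family P_{n+1}(x) = (x - b_n)P_n(x) - u_n P_{n-1}(x) (monic, P_0 = 1) and a real number a with P_n(a) ≠ 0 for all n, the Christoffel transforms P̃_n(x) = (P_{n+1}(x) - V_n P_n(x))/(x - a) with V_n = P_{n+1}(a)/P_n(a) are monic polynomials of degree n satisfying the recurrence P̃_{n+1}(x) = (x - b̃_n) P̃_n(x) - ũ_n P̃_{n-1}(x) with ũ_n = u_n V_n / V_{n-1} and b̃_n = b_{n+1} + V_{n+1} - V_n. -/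
open Polynomial

theorem stmt19 (b u : ℕ → ℝ) (hu : ∀ n, u n ≠ 0)
    (P : ℕ → Polynomial ℝ) (h0 : P 0 = 1) (h1 : P 1 = X - C (b 0))
    (hrec : ∀ n, 1 ≤ n → P (n + 1) = (X - C (b n)) * P n - C (u n) * P (n - 1))
    (a : ℝ) (ha : ∀ n, (P n).eval a ≠ 0)
    (V : ℕ → ℝ) (hV : ∀ n, V n = (P (n + 1)).eval a / (P n).eval a)
    (Q : ℕ → Polynomial ℝ)
    (hQ : ∀ n, (X - C a) * Q n = P (n + 1) - C (V n) * P n) :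
    (∀ n, (Q n).Monic ∧ (Q n).natDegree = n) ∧
    (∀ n, 1 ≤ n → Q (n + 1) = (X - C (b (n + 1) + V (n + 1) - V n)) * Q n
        - C (u n * V n / V (n - 1)) * Q (n - 1)) := by
  -- P n is monic of degree n
  have hP : ∀ n, (P n).Monic ∧ (P n).natDegree = n := by
    intro n
    induction n using Nat.strong_induction_on with
    | _ n ih =>
      match n with
      | 0 => simp [h0, monic_one]
      | 1 => simp [h1, monic_X_sub_C]
      | (m+2) =>
        have hm1 := ih (m+1) (by omega)
        have hm := ih m (by omega)
        have hrw : P (m + 2) = (X - C (b (m+1))) * P (m+1) - C (u (m+1)) * P m := by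
          have := hrec (m+1) (by omega); simpa using this
        have hmon1 : ((X - C (b (m+1))) * P (m+1)).Monic := (monic_X_sub_C _).mul hm1.1
        have hdeg1 : ((X - C (b (m+1))) * P (m+1)).natDegree = m + 2 := by
          rw [(monic_X_sub_C _).natDegree_mul hm1.1, natDegree_X_sub_C, hm1.2]; omega
        have hnd : (C (u (m+1)) * P m).natDegree < ((X - C (b (m+1))) * P (m+1)).natDegree := by
          have h := natDegree_C_mul_le (u (m+1)) (P m)
          rw [hm.2] at h; omega
        refine ⟨by rw [hrw]; exact hmon1.sub_of_left (degree_lt_degree hnd), ?_⟩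
        rw [hrw, natDegree_sub_eq_left_of_natDegree_lt hnd, hdeg1]
  -- Q n is monic of degree n
  have hQmd : ∀ n, (Q n).Monic ∧ (Q n).natDegree = n := by
    intro n
    have hnd : (C (V n) * P n).natDegree < (P (n+1)).natDegree := by
      have h := natDegree_C_mul_le (V n) (P n)
      rw [(hP n).2] at h; rw [(hP (n+1)).2]; omega
    have hmon : ((X - C a) * Q n).Monic := by
      rw [hQ n]; exact (hP (n+1)).1.sub_of_left (degree_lt_degree hnd)
    have hqm : (Q n).Monic := (monic_X_sub_C a).of_mul_monic_left hmon
    refine ⟨hqm, ?_⟩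
    have h2 : ((X - C a) * Q n).natDegree = n + 1 := by
      rw [hQ n, natDegree_sub_eq_left_of_natDegree_lt hnd, (hP (n+1)).2]
    rw [(monic_X_sub_C a).natDegree_mul hqm, natDegree_X_sub_C] at h2
    omega
  refine ⟨hQmd, ?_⟩
  intro n hn
  have hVne : ∀ m, V m ≠ 0 := fun m => by
    rw [hV m]; exact div_ne_zero (ha (m+1)) (ha m)
  have r1 : P (n+2) = (X - C (b (n+1))) * P (n+1) - C (u (n+1)) * P n := by
    have := hrec (n+1) (by omega); simpa using this
  have r0 : P (n+1) = (X - C (b n)) * P n - C (u n) * P (n-1) := hrec n hn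
  have ev1 : (P (n+2)).eval a = (a - b (n+1)) * (P (n+1)).eval a - u (n+1) * (P n).eval a := by
    rw [r1]; simp
  have ev0 : (P (n+1)).eval a = (a - b n) * (P n).eval a - u n * (P (n-1)).eval a := by
    rw [r0]; simp
  have hVp : ∀ m, V m * (P m).eval a = (P (m+1)).eval a := fun m => by
    rw [hV m]; exact div_mul_cancel₀ _ (ha m)
  have hVp' : V (n-1) * (P (n-1)).eval a = (P n).eval a := by
    have := hVp (n-1); rwa [show n - 1 + 1 = n from by omega] at this
  have s1 : V (n+1) * V n = (a - b (n+1)) * V n - u (n+1) := by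
    apply mul_right_cancel₀ (ha n)
    linear_combination (V (n+1)) * hVp n + hVp (n+1) + ev1 - (a - b (n+1)) * hVp n
  have s2 : V n * V (n-1) = (a - b n) * V (n-1) - u n := by
    apply mul_right_cancel₀ (ha (n-1))
    linear_combination (V n) * hVp' + hVp n + ev0 - (a - b n) * hVp'
  have s4 : u n * V n / V (n-1) = (a - b n - V n) * V n := by
    rw [div_eq_iff (hVne (n-1))]
    linear_combination V n * s2
  have s5 : u n * V n = (u n * V n / V (n-1)) * V (n-1) :=
    (div_mul_cancel₀ _ (hVne (n-1))).symm
  have E1 := congrArg (C : ℝ →+* ℝ[X]) s1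
  have E4 := congrArg (C : ℝ →+* ℝ[X]) s4
  have E5 := congrArg (C : ℝ →+* ℝ[X]) s5
  simp only [map_mul, map_sub] at E1 E4 E5
  have hq1 := hQ n
  have hq2 := hQ (n-1)
  rw [show n - 1 + 1 = n from by omega] at hq2
  have hQ' := hQ (n+1)
  apply mul_left_cancel₀ (X_sub_C_ne_zero a)
  simp only [C_add, C_sub]
  linear_combination hQ' - (X - C (b (n+1)) - C (V (n+1)) + C (V n)) * hq1
    + C (u n * V n / V (n-1)) * hq2 + r1 - C (V n) * r0
    - P n * E1 + P n * E4 + P (n-1) * E5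
end
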